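/- Let k ≥ 1 be an integer, β ∈ (1,2) and α ∈ (k−1, k−1/β). Let g : ℝ → ℝ vanish on (−∞,0), be k-times continuously differentiable on (0,∞) with |g^{(k)}(t)| ≤ C t^{α−k} for all t > 0, and be such that ζ(t) := g(t) t^{−α} has the property that lim_{t↓0} ζ^{(j)}(t) exists in ℝ for all j = 0,…,k. Define g_{i,n,k−1}(s) := ∑_{j=0}^{k−1} (−1)^j binom(k−1,j) g((i−j)/n − s). Then, interpreting g^{(k−1)} as 0 on (−∞,0], one has the convergence ∫_ℝ |n^{k−1} ( g_{n,n,k−1}(s) − g_{k−1,n,k−1}(s) )|^β ds → ∫_ℝ |g^{(k−1)}(1−s) − g^{(k−1)}(−s)|^β ds =: c₀ as n → ∞, and c₀ < ∞. -/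

import Mathlib

/-!
Write `m = k - 1` and let `Gⱼ` be `g⁽ʲ⁾` on `(0, ∞)`, extended by zero. Since the derivatives of
`ζ` stay bounded at `0`, Leibniz' rule for `g = ζ · t ^ α` gives `g⁽ʲ⁾(t) = O(t ^ (α - j))` as
`t ↓ 0`; as `α > m`, the functions `G₀, …, Gₘ` are continuous and `Gⱼ' = Gⱼ₊₁` on all of `ℝ`
for `j < m`. The kernel `g_{i,n,m}` is an `m`-th difference with step `1 / n`, so by the mean value
theorem `n ^ m (g_{n,n,m} - g_{m,n,m})(s) = Gₘ(ξ₁) - Gₘ(ξ₂)` with `ξ₁ → 1 - s`, `ξ₂ → -s`, both in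
`[-s, 1 - s]`. This converges pointwise and is dominated by `K (1 + |s|) ^ (α - k)`: it vanishes
for `s > 1`, is bounded for `|s| ≤ 1`, and for `s < -1` the bound `|g⁽ᵏ⁾(t)| ≤ C t ^ (α - k)`
controls the increment of `Gₘ` on `[-s, 1 - s]`. As `(α - k) β < -1` the bound lies in `L^β`,
and dominated convergence concludes.
-/

open MeasureTheory Filter Set Topology

/-- The kernel of the `m`-th order increment of the driven moving average:
`g_{i,n,m}(s) = ∑_{j=0}^m (−1)^j (m choose j) g((i−j)/n − s)`. -/
noncomputable def ginKernel (g : ℝ → ℝ) (m n i : ℕ) (s : ℝ) : ℝ :=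
  ∑ j ∈ Finset.range (m + 1), (-1 : ℝ) ^ j * (m.choose j : ℝ) *
    g (((i : ℝ) - (j : ℝ)) / (n : ℝ) - s)

open Asymptotics

theorem ginKernel_eq_iterate_fwdDiff (g : ℝ → ℝ) (m n i : ℕ) (s : ℝ) :
    ginKernel g m n i s = (fwdDiff (1 / (n : ℝ)))^[m] g (((i : ℝ) - m) / n - s) := by
  rw [fwdDiff_iter_eq_sum_shift, ginKernel, ← Finset.sum_range_reflect]
  refine Finset.sum_congr rfl fun j hj => ?_
  have hjm : j ≤ m := Nat.lt_succ_iff.mp (Finset.mem_range.mp hj)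
  rw [add_tsub_cancel_right, Nat.choose_symm hjm, zsmul_eq_mul, nsmul_eq_mul, Nat.cast_sub hjm]
  push_cast
  ring_nf

theorem Continuous.iterate_fwdDiff {M G : Type*} [AddCommMonoid M] [TopologicalSpace M]
    [ContinuousAdd M] [AddCommGroup G] [TopologicalSpace G] [IsTopologicalAddGroup G]
    {f : M → G} (hf : Continuous f) (h : M) (m : ℕ) : Continuous ((fwdDiff h)^[m] f) := by
  induction m with
  | zero => exact hf
  | succ m ih =>
    rw [Function.iterate_succ_apply']
    exact (ih.comp (continuous_add_const h)).sub ih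

theorem hasDerivAt_fwdDiff {f f' : ℝ → ℝ} (hf : ∀ x, HasDerivAt f (f' x) x) (h x : ℝ) :
    HasDerivAt (fwdDiff h f) (fwdDiff h f' x) x :=
  ((hf (x + h)).comp_add_const x h).sub (hf x)

theorem exists_iterate_fwdDiff_eq_pow_mul {F : ℕ → ℝ → ℝ} {m : ℕ}
    (hF : ∀ j < m, ∀ x, HasDerivAt (F j) (F (j + 1) x) x) {h : ℝ} (hh : 0 < h) (x : ℝ) :
    ∃ ξ ∈ Icc x (x + m * h), (fwdDiff h)^[m] (F 0) x = h ^ m * F m ξ := by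
  induction m generalizing F x with
  | zero => exact ⟨x, by simp, by simp⟩
  | succ m ih =>
    obtain ⟨ξ, hξ, hΔ⟩ := ih (F := fun j => fwdDiff h (F j))
      (fun j hj => hasDerivAt_fwdDiff (hF j (by omega)) h) x
    obtain ⟨η, hη, hslope⟩ := exists_hasDerivAt_eq_slope (F m) (F (m + 1))
      (lt_add_of_pos_right ξ hh)
      (fun y _ => (hF m (by omega) y).continuousAt.continuousWithinAt)
      (fun y _ => hF m (by omega) y)
    refine ⟨η, ⟨hξ.1.trans hη.1.le, ?_⟩, ?_⟩
    · push_cast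
      linarith [hξ.2, hη.2]
    · rw [Function.iterate_succ_apply, hΔ, hslope, fwdDiff, add_sub_cancel_left]
      field_simp
      ring

theorem exists_pow_mul_iterate_fwdDiff_eq {F : ℕ → ℝ → ℝ} {m : ℕ}
    (hF : ∀ j < m, ∀ x, HasDerivAt (F j) (F (j + 1) x) x) {n : ℕ} (hn : n ≠ 0) (x : ℝ) :
    ∃ ξ ∈ Icc x (x + m / n), (n : ℝ) ^ m * (fwdDiff (1 / (n : ℝ)))^[m] (F 0) x = F m ξ := by
  have hn' : (0 : ℝ) < n := by positivity
  obtain ⟨ξ, hξ, hΔ⟩ := exists_iterate_fwdDiff_eq_pow_mul hF (one_div_pos.2 hn') x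
  refine ⟨ξ, by rwa [← div_eq_mul_one_div] at hξ, ?_⟩
  rw [hΔ, ← mul_assoc, ← mul_pow, mul_one_div_cancel hn'.ne', one_pow, one_mul]

theorem tendsto_pow_mul_iterate_fwdDiff {F : ℕ → ℝ → ℝ} {m : ℕ}
    (hF : ∀ j < m, ∀ x, HasDerivAt (F j) (F (j + 1) x) x) (hc : Continuous (F m))
    {x : ℕ → ℝ} {a : ℝ} (hx : Tendsto x atTop (𝓝 a)) :
    Tendsto (fun n : ℕ => (n : ℝ) ^ m * (fwdDiff (1 / (n : ℝ)))^[m] (F 0) (x n)) atTop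
      (𝓝 (F m a)) := by
  have hξ : ∀ n : ℕ, ∃ ξ, n ≠ 0 → ξ ∈ Icc (x n) (x n + m / n) ∧
      (n : ℝ) ^ m * (fwdDiff (1 / (n : ℝ)))^[m] (F 0) (x n) = F m ξ := fun n => by
    by_cases hn : n = 0
    · exact ⟨0, fun h => absurd hn h⟩
    · obtain ⟨ξ, hξ, hΔ⟩ := exists_pow_mul_iterate_fwdDiff_eq hF hn (x n)
      exact ⟨ξ, fun _ => ⟨hξ, hΔ⟩⟩
  choose ξ hξ using hξ
  have hpos : ∀ᶠ n : ℕ in atTop, n ≠ 0 := eventually_ne_atTop 0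
  have hupper : Tendsto (fun n : ℕ => x n + m / n) atTop (𝓝 a) := by
    simpa using hx.add (tendsto_const_div_atTop_nhds_zero_nat (m : ℝ))
  have hξa : Tendsto ξ atTop (𝓝 a) :=
    tendsto_of_tendsto_of_tendsto_of_le_of_le' hx hupper
      (hpos.mono fun n hn => (hξ n hn).1.1) (hpos.mono fun n hn => (hξ n hn).1.2)
  exact ((hc.tendsto a).comp hξa).congr' (hpos.mono fun n hn => (hξ n hn).2.symm)

theorem isBigO_rpow_rpow_nhdsGT_zero {a b : ℝ} (hab : b ≤ a) :
    (fun t : ℝ => t ^ a) =O[𝓝[>] 0] fun t => t ^ b := by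
  refine IsBigO.of_bound 1 ?_
  filter_upwards [Ioo_mem_nhdsGT (zero_lt_one' ℝ)] with t ht
  rw [one_mul, Real.norm_of_nonneg (by positivity [ht.1.le]),
    Real.norm_of_nonneg (by positivity [ht.1.le])]
  exact Real.rpow_le_rpow_of_exponent_ge ht.1 ht.2.le hab

theorem tendsto_rpow_nhdsGT_zero {q : ℝ} (hq : 0 < q) :
    Tendsto (fun t : ℝ => t ^ q) (𝓝[>] 0) (𝓝 0) := by
  simpa [Real.zero_rpow hq.ne'] using
    (Real.continuousAt_rpow_const 0 q (Or.inr hq.le)).tendsto.mono_left nhdsWithin_le_nhds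

theorem indicator_Ioi_eventuallyEq {f : ℝ → ℝ} {x : ℝ} (hx : 0 < x) :
    (Ioi 0).indicator f =ᶠ[𝓝 x] f :=
  eventuallyEq_of_mem (Ioi_mem_nhds hx) fun _ hy => indicator_of_mem hy f

theorem continuous_indicator_Ioi {f : ℝ → ℝ} (hf : ContinuousOn f (Ioi 0))
    (h0 : Tendsto f (𝓝[>] 0) (𝓝 0)) : Continuous ((Ioi 0).indicator f) := by
  refine continuous_iff_continuousAt.2 fun x => ?_
  rcases lt_trichotomy x 0 with hx | rfl | hx
  · refine continuousAt_const.congr (f := fun _ => (0 : ℝ)) ?_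
    filter_upwards [Iio_mem_nhds hx] with y hy
    exact (indicator_of_notMem (notMem_Ioi.2 hy.le) f).symm
  · refine continuousAt_iff_continuous_left'_right'.2 ⟨?_, ?_⟩
    · refine (continuousWithinAt_const (b := (0 : ℝ))).congr (fun y hy => ?_) ?_
      exacts [indicator_of_notMem (notMem_Ioi.2 hy.le) f,
        indicator_of_notMem self_notMem_Ioi f]
    · rw [ContinuousWithinAt, indicator_of_notMem (self_notMem_Ioi (a := (0:ℝ)))]
      exact h0.congr' (eventuallyEq_nhdsWithin_of_eqOn fun y hy => (indicator_of_mem hy f).symm)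
  · exact (hf.continuousAt (Ioi_mem_nhds hx)).congr (indicator_Ioi_eventuallyEq hx).symm

theorem hasDerivAt_indicator_Ioi {f f' : ℝ → ℝ} {p : ℝ} (hp : 1 < p)
    (hf : ∀ x > 0, HasDerivAt f (f' x) x) (hO : f =O[𝓝[>] 0] fun t => t ^ p) (x : ℝ) :
    HasDerivAt ((Ioi 0).indicator f) ((Ioi 0).indicator f' x) x := by
  rcases lt_trichotomy x 0 with hx | rfl | hx
  · rw [indicator_of_notMem (notMem_Ioi.2 hx.le)]
    refine (hasDerivAt_const x 0).congr_of_eventuallyEq ?_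
    filter_upwards [Iio_mem_nhds hx] with y hy
    exact indicator_of_notMem (notMem_Ioi.2 hy.le) f
  · rw [indicator_of_notMem (self_notMem_Ioi (a := (0:ℝ))), hasDerivAt_iff_isLittleO_nhds_zero]
    simp only [zero_add, indicator_of_notMem (self_notMem_Ioi (a := (0:ℝ))), sub_zero, smul_zero]
    rw [← nhdsLE_sup_nhdsGT]
    refine IsLittleO.sup ((isLittleO_zero _ _).congr' ?_ EventuallyEq.rfl) ?_
    · filter_upwards [self_mem_nhdsWithin] with y hy
      exact (indicator_of_notMem (notMem_Ioi.2 hy) f).symm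
    have hpow : (fun t : ℝ => t ^ p) =o[𝓝[>] 0] fun t => t := by
      have h := ((isLittleO_one_iff ℝ).2 (tendsto_rpow_nhdsGT_zero (sub_pos.2 hp))).mul_isBigO
        (isBigO_refl (fun t : ℝ => t) (𝓝[>] 0))
      refine h.congr' ?_ (by simp)
      filter_upwards [self_mem_nhdsWithin] with t ht
      rw [← Real.rpow_add_one (ne_of_gt ht), sub_add_cancel]
    refine (hO.trans_isLittleO hpow).congr' ?_ EventuallyEq.rfl
    filter_upwards [self_mem_nhdsWithin] with y hy
    exact (indicator_of_mem hy f).symm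
  · rw [indicator_of_mem (mem_Ioi.2 hx)]
    exact (hf x hx).congr_of_eventuallyEq (indicator_Ioi_eventuallyEq hx)

theorem hasDerivAt_iteratedDerivWithin_of_isOpen {𝕜 F : Type*} [NontriviallyNormedField 𝕜]
    [NormedAddCommGroup F] [NormedSpace 𝕜 F] {f : 𝕜 → F} {s : Set 𝕜} {n j : ℕ}
    (hs : IsOpen s) (hf : ContDiffOn 𝕜 n f s) (hj : j < n) {x : 𝕜} (hx : x ∈ s) :
    HasDerivAt (iteratedDerivWithin j f s) (iteratedDerivWithin (j + 1) f s x) x := by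
  rw [iteratedDerivWithin_succ, derivWithin_of_isOpen hs hx]
  exact ((hf.differentiableOn_iteratedDerivWithin (mod_cast hj) hs.uniqueDiffOn x hx)
    |>.differentiableAt (hs.mem_nhds hx)).hasDerivAt

theorem iteratedDerivWithin_Ioi_isBigO_rpow {f : ℝ → ℝ} {α : ℝ} {j : ℕ}
    (hf : ContDiffOn ℝ j f (Ioi 0))
    (hζ : ∀ i ≤ j, ∃ L, Tendsto (iteratedDerivWithin i (fun t => f t * t ^ (-α)) (Ioi 0))
      (𝓝[>] 0) (𝓝 L)) :
    iteratedDerivWithin j f (Ioi 0) =O[𝓝[>] 0] fun t => t ^ (α - j) := by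
  set ζ : ℝ → ℝ := fun t => f t * t ^ (-α)
  have hrpow : ∀ p : ℝ, ContDiffOn ℝ j (fun t : ℝ => t ^ p) (Ioi 0) := fun p t ht =>
    (Real.contDiffAt_rpow_const_of_ne (ne_of_gt ht)).contDiffWithinAt
  have hζc : ContDiffOn ℝ j ζ (Ioi 0) := hf.mul (hrpow (-α))
  have hfζ : EqOn (ζ * fun t => t ^ α) f (Ioi 0) := fun t ht => by
    simp [ζ, mul_assoc, ← Real.rpow_add (mem_Ioi.1 ht)]
  have hleibniz : EqOn (iteratedDerivWithin j f (Ioi 0)) (fun t => ∑ i ∈ Finset.range (j + 1),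
      j.choose i * iteratedDerivWithin i ζ (Ioi 0) t *
        ((descPochhammer ℝ (j - i)).eval α * t ^ (α - (j - i : ℕ)))) (Ioi 0) := fun t ht => by
    rw [← iteratedDerivWithin_congr hfζ ht,
      iteratedDerivWithin_mul ht (uniqueDiffOn_Ioi 0) (hζc t ht) (hrpow α t ht)]
    refine Finset.sum_congr rfl fun i _ => ?_
    rw [iteratedDerivWithin_of_isOpen_eq_iterate (f := fun t : ℝ => t ^ α) isOpen_Ioi ht,
      Real.iter_deriv_rpow_const]
  refine IsBigO.congr' ?_ (eventuallyEq_nhdsWithin_of_eqOn hleibniz).symm EventuallyEq.rfl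
  refine IsBigO.fun_sum fun i hi => ?_
  obtain ⟨L, hL⟩ := hζ i (Nat.lt_succ_iff.1 (Finset.mem_range.1 hi))
  have hpow := isBigO_rpow_rpow_nhdsGT_zero (a := α - (j - i : ℕ)) (b := α - j)
    (by gcongr; exact_mod_cast Nat.sub_le j i)
  exact (((hL.isBigO_one ℝ).const_mul_left _).mul (hpow.const_mul_left _)).congr_right
    (by simp)

theorem abs_sub_le_of_abs_deriv_le_rpow {Φ Φ' : ℝ → ℝ} {C γ : ℝ} (hγ : γ ≤ 0)
    (hΦ : ∀ t > 0, HasDerivAt Φ (Φ' t) t) (hΦ' : ∀ t > 0, |Φ' t| ≤ C * t ^ γ)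
    {c a b : ℝ} (hc : 0 < c) (ha : a ∈ Icc c (c + 1)) (hb : b ∈ Icc c (c + 1)) :
    |Φ a - Φ b| ≤ C * c ^ γ := by
  have hpos : ∀ t ∈ Icc c (c + 1), 0 < t := fun t ht => hc.trans_le ht.1
  have hCc : 0 ≤ C * c ^ γ := (abs_nonneg _).trans (hΦ' c hc)
  have hC : 0 ≤ C := (mul_nonneg_iff_of_pos_right (by positivity)).1 hCc
  have hmvt := (convex_Icc c (c + 1)).norm_image_sub_le_of_norm_hasDerivWithin_le
    (fun t ht => (hΦ t (hpos t ht)).hasDerivWithinAt)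
    (fun t ht => (hΦ' t (hpos t ht)).trans
      (mul_le_mul_of_nonneg_left (Real.rpow_le_rpow_of_nonpos hc ht.1 hγ) hC)) hb ha
  have hab : ‖a - b‖ ≤ 1 := abs_sub_le_iff.2 ⟨by linarith [ha.2, hb.1], by linarith [ha.1, hb.2]⟩
  calc |Φ a - Φ b| ≤ C * c ^ γ * ‖a - b‖ := hmvt
    _ ≤ C * c ^ γ * 1 := by gcongr
    _ = C * c ^ γ := mul_one _

theorem exists_abs_sub_le_mul_one_add_abs_rpow {Φ Φ' : ℝ → ℝ} {C γ : ℝ} (hγ : γ ≤ 0)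
    (hcont : Continuous Φ) (h0 : ∀ t ≤ 0, Φ t = 0) (hΦ : ∀ t > 0, HasDerivAt Φ (Φ' t) t)
    (hΦ' : ∀ t > 0, |Φ' t| ≤ C * t ^ γ) :
    ∃ K, 0 ≤ K ∧ ∀ s a b, a ∈ Icc (-s) (1 - s) → b ∈ Icc (-s) (1 - s) →
      |Φ a - Φ b| ≤ K * (1 + |s|) ^ γ := by
  obtain ⟨M, hM⟩ := (isCompact_Icc (a := (-1 : ℝ)) (b := 2)).exists_bound_of_continuousOn
    hcont.continuousOn
  have hM0 : 0 ≤ M := (norm_nonneg _).trans (hM 0 ⟨by norm_num, by norm_num⟩)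
  have hC0 : 0 ≤ C := by simpa using (abs_nonneg _).trans (hΦ' 1 one_pos)
  refine ⟨max (2 * M) C * 2 ^ (-γ), by positivity, fun s a b ha hb => ?_⟩
  have hscale : ∀ c > 0, 1 + |s| ≤ 2 * c → c ^ γ ≤ 2 ^ (-γ) * (1 + |s|) ^ γ := fun c hc hcs => by
    calc c ^ γ = 2 ^ (-γ) * (2 * c) ^ γ := by
          rw [Real.mul_rpow zero_le_two hc.le, ← mul_assoc, ← Real.rpow_add two_pos,
            neg_add_cancel, Real.rpow_zero, one_mul]
      _ ≤ 2 ^ (-γ) * (1 + |s|) ^ γ :=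
          mul_le_mul_of_nonneg_left (Real.rpow_le_rpow_of_nonpos (by positivity) hcs hγ)
            (by positivity)
  rw [mul_assoc]
  rcases lt_or_ge s (-1) with hs | hs
  · have hIcc : Icc (-s) (1 - s) = Icc (-s) (-s + 1) := by rw [neg_add_eq_sub]
    rw [hIcc] at ha hb
    calc |Φ a - Φ b| ≤ C * (-s) ^ γ :=
          abs_sub_le_of_abs_deriv_le_rpow hγ hΦ hΦ' (by linarith) ha hb
      _ ≤ C * (2 ^ (-γ) * (1 + |s|) ^ γ) := mul_le_mul_of_nonneg_left
          (hscale _ (by linarith) (by rw [abs_of_neg (by linarith)]; linarith)) hC0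
      _ ≤ max (2 * M) C * (2 ^ (-γ) * (1 + |s|) ^ γ) :=
          mul_le_mul_of_nonneg_right (le_max_right _ _) (by positivity)
  rcases le_or_gt s 1 with hs' | hs'
  · have hbound : ∀ x ∈ Icc (-s) (1 - s), |Φ x| ≤ M := fun x hx =>
      hM x ⟨by linarith [hx.1], by linarith [hx.2]⟩
    calc |Φ a - Φ b| ≤ 2 * M := by linarith [abs_sub (Φ a) (Φ b), hbound a ha, hbound b hb]
      _ ≤ max (2 * M) C * 1 := by rw [mul_one]; exact le_max_left _ _
      _ ≤ max (2 * M) C * (2 ^ (-γ) * (1 + |s|) ^ γ) := by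
          gcongr
          simpa using hscale 1 one_pos (by linarith [abs_le.2 ⟨hs, hs'⟩])
  · rw [h0 a (by linarith [ha.2]), h0 b (by linarith [hb.2]), sub_zero, abs_zero]
    positivity

theorem tendsto_integral_abs_rpow_of_dominated {α ι : Type*} [MeasurableSpace α] {μ : Measure α}
    {l : Filter ι} [l.IsCountablyGenerated] [l.NeBot] {u : ι → α → ℝ} {v B : α → ℝ} {β : ℝ}
    (hβ : 0 < β) (hu : ∀ i, AEStronglyMeasurable (u i) μ) (hB : Integrable (fun a => B a ^ β) μ)
    (hbound : ∀ᶠ i in l, ∀ a, |u i a| ≤ B a)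
    (hlim : ∀ᵐ a ∂μ, Tendsto (fun i => u i a) l (𝓝 (v a))) :
    Integrable (fun a => |v a| ^ β) μ ∧
      Tendsto (fun i => ∫ a, |u i a| ^ β ∂μ) l (𝓝 (∫ a, |v a| ^ β ∂μ)) := by
  have hpow : Continuous fun x : ℝ => |x| ^ β :=
    continuous_abs.rpow_const fun _ => Or.inr hβ.le
  have hmeas : ∀ i, AEStronglyMeasurable (fun a => |u i a| ^ β) μ := fun i =>
    hpow.comp_aestronglyMeasurable (hu i)
  have hlimβ : ∀ᵐ a ∂μ, Tendsto (fun i => |u i a| ^ β) l (𝓝 (|v a| ^ β)) :=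
    hlim.mono fun a ha => (hpow.tendsto _).comp ha
  have hboundβ : ∀ᶠ i in l, ∀ a, ‖|u i a| ^ β‖ ≤ B a ^ β := hbound.mono fun i hi a => by
    rw [Real.norm_of_nonneg (by positivity)]
    exact Real.rpow_le_rpow (abs_nonneg _) (hi a) hβ.le
  refine ⟨hB.mono' (aestronglyMeasurable_of_tendsto_ae l hmeas hlimβ) ?_,
    tendsto_integral_filter_of_dominated_convergence _ (Eventually.of_forall hmeas)
      (hboundβ.mono fun i hi => ae_of_all _ hi) hB hlimβ⟩
  filter_upwards [hlimβ] with a ha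
  exact le_of_tendsto ha.norm (hboundβ.mono fun i hi => hi a)

theorem ginKernel_ae_eq {f₁ f₂ : ℝ → ℝ} (h : f₁ =ᵐ[volume] f₂) (m n i : ℕ) :
    ginKernel f₁ m n i =ᵐ[volume] ginKernel f₂ m n i := by
  have hshift : ∀ c : ℝ, (fun s => f₁ (c - s)) =ᵐ[volume] fun s => f₂ (c - s) := fun c =>
    (volume.measurePreserving_sub_left c).quasiMeasurePreserving.ae_eq_comp h
  filter_upwards [(eventually_all_finset (Finset.range (m + 1))).2 fun j _ =>
    hshift (((i : ℝ) - j) / n)] with s hs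
  exact Finset.sum_congr rfl fun j hj => by rw [hs j hj]

theorem pow_mul_ginKernel_sub_eq (f : ℝ → ℝ) (m n : ℕ) (s : ℝ) :
    (n : ℝ) ^ m * (ginKernel f m n n s - ginKernel f m n m s) =
      (n : ℝ) ^ m * (fwdDiff (1 / (n : ℝ)))^[m] f (((n : ℝ) - m) / n - s) -
        (n : ℝ) ^ m * (fwdDiff (1 / (n : ℝ)))^[m] f (-s) := by
  simp only [ginKernel_eq_iterate_fwdDiff, sub_self, zero_div, zero_sub, mul_sub]

theorem exists_pow_mul_ginKernel_sub_eq {F : ℕ → ℝ → ℝ} {m n : ℕ}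
    (hF : ∀ j < m, ∀ x, HasDerivAt (F j) (F (j + 1) x) x) (hn : n ≠ 0) (hmn : m ≤ n) (s : ℝ) :
    ∃ ξ₁ ∈ Icc (-s) (1 - s), ∃ ξ₂ ∈ Icc (-s) (1 - s),
      (n : ℝ) ^ m * (ginKernel (F 0) m n n s - ginKernel (F 0) m n m s) = F m ξ₁ - F m ξ₂ := by
  have hmn' : (m : ℝ) / n ≤ 1 := div_le_one_of_le₀ (by exact_mod_cast hmn) (Nat.cast_nonneg n)
  have hshift : ((n : ℝ) - m) / n = 1 - m / n := by field_simp
  obtain ⟨ξ₁, h₁, e₁⟩ := exists_pow_mul_iterate_fwdDiff_eq hF hn (((n : ℝ) - m) / n - s)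
  obtain ⟨ξ₂, h₂, e₂⟩ := exists_pow_mul_iterate_fwdDiff_eq hF hn (-s)
  rw [hshift] at h₁
  refine ⟨ξ₁, ⟨by linarith [h₁.1], by linarith [h₁.2]⟩, ξ₂, ⟨h₂.1, by linarith [h₂.2]⟩, ?_⟩
  rw [pow_mul_ginKernel_sub_eq, e₁, e₂]

theorem tendsto_pow_mul_ginKernel_sub {F : ℕ → ℝ → ℝ} {m : ℕ}
    (hF : ∀ j < m, ∀ x, HasDerivAt (F j) (F (j + 1) x) x) (hcont : Continuous (F m)) (s : ℝ) :
    Tendsto (fun n : ℕ => (n : ℝ) ^ m * (ginKernel (F 0) m n n s - ginKernel (F 0) m n m s))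
      atTop (𝓝 (F m (1 - s) - F m (-s))) := by
  have hx : Tendsto (fun n : ℕ => ((n : ℝ) - m) / n - s) atTop (𝓝 (1 - s)) := by
    refine Tendsto.congr' ?_ (by simpa using
      ((tendsto_const_div_atTop_nhds_zero_nat (m : ℝ)).const_sub 1).sub_const s)
    filter_upwards [eventually_ne_atTop 0] with n hn
    field_simp
  exact ((tendsto_pow_mul_iterate_fwdDiff hF hcont hx).sub
    (tendsto_pow_mul_iterate_fwdDiff hF hcont tendsto_const_nhds)).congr
    fun n => (pow_mul_ginKernel_sub_eq _ m n s).symm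

theorem integrable_and_tendsto_integral_pow_mul_ginKernel_sub {F : ℕ → ℝ → ℝ} {F' : ℝ → ℝ}
    {m : ℕ} {β γ C : ℝ} (hβ : 0 < β) (hγβ : γ * β < -1)
    (hF : ∀ j < m, ∀ x, HasDerivAt (F j) (F (j + 1) x) x) (hcont : Continuous (F m))
    (hzero : ∀ t ≤ 0, F m t = 0) (hderiv : ∀ t > 0, HasDerivAt (F m) (F' t) t)
    (hbound : ∀ t > 0, |F' t| ≤ C * t ^ γ) :
    Integrable (fun s => |F m (1 - s) - F m (-s)| ^ β) ∧
    Tendsto (fun n : ℕ =>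
        ∫ s, |(n : ℝ) ^ m * (ginKernel (F 0) m n n s - ginKernel (F 0) m n m s)| ^ β)
      atTop (𝓝 (∫ s, |F m (1 - s) - F m (-s)| ^ β)) := by
  have hγ : γ ≤ 0 := by by_contra! h; nlinarith
  have hcont0 : Continuous (F 0) := by
    rcases m with _ | m
    exacts [hcont, continuous_iff_continuousAt.2 fun x => (hF 0 m.succ_pos x).continuousAt]
  obtain ⟨K, hK, hdom⟩ := exists_abs_sub_le_mul_one_add_abs_rpow hγ hcont hzero hderiv hbound
  have hB : (fun s : ℝ => (K * (1 + |s|) ^ γ) ^ β) =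
      fun s => K ^ β * (1 + ‖s‖) ^ (-(-(γ * β))) := funext fun s => by
    rw [Real.mul_rpow hK (by positivity), ← Real.rpow_mul (by positivity), neg_neg,
      Real.norm_eq_abs]
  refine tendsto_integral_abs_rpow_of_dominated hβ (fun n => ?_) (B := fun s => K * (1 + |s|) ^ γ)
    ?_ ?_ (ae_of_all _ (tendsto_pow_mul_ginKernel_sub hF hcont))
  · have hΔ := hcont0.iterate_fwdDiff (1 / (n : ℝ)) m
    exact ((continuous_congr (pow_mul_ginKernel_sub_eq _ m n)).2 (by fun_prop)).aestronglyMeasurable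
  · rw [hB]
    exact (integrable_one_add_norm
      (by simp only [Module.finrank_self]; push_cast; linarith)).const_mul _
  · filter_upwards [eventually_ge_atTop (m + 1)] with n hn s
    obtain ⟨ξ₁, h₁, ξ₂, h₂, e⟩ :=
      exists_pow_mul_ginKernel_sub_eq (n := n) hF (by omega) (by omega) s
    exact e ▸ hdom s ξ₁ ξ₂ h₁ h₂

noncomputable def zeroExtIteratedDeriv (g : ℝ → ℝ) (j : ℕ) : ℝ → ℝ :=
  (Ioi 0).indicator (iteratedDerivWithin j g (Ioi 0))

section zeroExtIteratedDeriv

variable {g : ℝ → ℝ} {n j : ℕ} {α : ℝ}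

theorem continuous_zeroExtIteratedDeriv (hg : ContDiffOn ℝ n g (Ioi 0)) (hj : j < n)
    (hjα : j < α) (hζ : ∀ i ≤ j, ∃ L, Tendsto
      (iteratedDerivWithin i (fun t => g t * t ^ (-α)) (Ioi 0)) (𝓝[>] 0) (𝓝 L)) :
    Continuous (zeroExtIteratedDeriv g j) :=
  continuous_indicator_Ioi
    (fun x hx => (hasDerivAt_iteratedDerivWithin_of_isOpen isOpen_Ioi hg hj hx).continuousAt
      |>.continuousWithinAt)
    ((iteratedDerivWithin_Ioi_isBigO_rpow (hg.of_le (by exact_mod_cast hj.le)) hζ).trans_tendsto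
      (tendsto_rpow_nhdsGT_zero (sub_pos.2 hjα)))

theorem hasDerivAt_zeroExtIteratedDeriv (hg : ContDiffOn ℝ n g (Ioi 0)) (hj : j < n)
    (hjα : j + 1 < α) (hζ : ∀ i ≤ j, ∃ L, Tendsto
      (iteratedDerivWithin i (fun t => g t * t ^ (-α)) (Ioi 0)) (𝓝[>] 0) (𝓝 L)) (x : ℝ) :
    HasDerivAt (zeroExtIteratedDeriv g j) (zeroExtIteratedDeriv g (j + 1) x) x :=
  hasDerivAt_indicator_Ioi (lt_sub_iff_add_lt'.2 hjα)
    (fun _ hx => hasDerivAt_iteratedDerivWithin_of_isOpen isOpen_Ioi hg hj hx)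
    (iteratedDerivWithin_Ioi_isBigO_rpow (hg.of_le (by exact_mod_cast hj.le)) hζ) x

theorem ae_eq_zeroExtIteratedDeriv_zero (hg : ∀ t < 0, g t = 0) :
    g =ᵐ[volume] zeroExtIteratedDeriv g 0 := by
  filter_upwards [compl_mem_ae_iff.2 (measure_singleton (0 : ℝ))] with t ht
  rcases lt_or_gt_of_ne ht with ht | ht
  · rw [hg t ht, zeroExtIteratedDeriv, indicator_of_notMem (notMem_Ioi.2 ht.le)]
  · rw [zeroExtIteratedDeriv, indicator_of_mem (mem_Ioi.2 ht), iteratedDerivWithin_zero]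

end zeroExtIteratedDeriv

theorem integrable_and_tendsto_integral_zeroExtIteratedDeriv {g : ℝ → ℝ} {m : ℕ} {α β C : ℝ}
    (hβ : 0 < β) (hα : m < α) (hαβ : (α - (m + 1)) * β < -1)
    (hg : ContDiffOn ℝ (m + 1 : ℕ) g (Ioi 0))
    (hgb : ∀ t > 0, |iteratedDerivWithin (m + 1) g (Ioi 0) t| ≤ C * t ^ (α - (m + 1)))
    (hζ : ∀ i ≤ m, ∃ L, Tendsto
      (iteratedDerivWithin i (fun t => g t * t ^ (-α)) (Ioi 0)) (𝓝[>] 0) (𝓝 L)) :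
    Integrable (fun s => |zeroExtIteratedDeriv g m (1 - s) - zeroExtIteratedDeriv g m (-s)| ^ β) ∧
    Tendsto (fun n : ℕ => ∫ s, |(n : ℝ) ^ m * (ginKernel (zeroExtIteratedDeriv g 0) m n n s -
        ginKernel (zeroExtIteratedDeriv g 0) m n m s)| ^ β)
      atTop (𝓝 (∫ s, |zeroExtIteratedDeriv g m (1 - s) - zeroExtIteratedDeriv g m (-s)| ^ β)) := by
  have hm : m < m + 1 := m.lt_succ_self
  refine integrable_and_tendsto_integral_pow_mul_ginKernel_sub hβ hαβ
    (fun j hj => hasDerivAt_zeroExtIteratedDeriv hg (by omega) ?_ fun i hi => hζ i (by omega))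
    (continuous_zeroExtIteratedDeriv hg hm hα hζ)
    (fun t ht => indicator_of_notMem (notMem_Ioi.2 ht) _)
    (fun t ht => (hasDerivAt_iteratedDerivWithin_of_isOpen isOpen_Ioi hg hm ht)
      |>.congr_of_eventuallyEq (indicator_Ioi_eventuallyEq ht)) (by exact_mod_cast hgb)
  have : (j : ℝ) + 1 ≤ m := by exact_mod_cast hj
  linarith

theorem statement18_general
    {k : ℕ} (hk : 1 ≤ k) {β α : ℝ} (hβ1 : 1 < β)
    (hα1 : (k : ℝ) - 1 < α) (hα2 : α < (k : ℝ) - 1 / β)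
    (g : ℝ → ℝ)
    (hg0 : ∀ t < (0 : ℝ), g t = 0)
    (hgk : ContDiffOn ℝ (k : ℕ∞) g (Set.Ioi (0 : ℝ)))
    {C : ℝ}
    (hgkb : ∀ t > (0 : ℝ),
      |iteratedDerivWithin k g (Set.Ioi (0 : ℝ)) t| ≤ C * t ^ (α - (k : ℝ)))
    (hζ : ∀ j : ℕ, j ≤ k → ∃ L : ℝ,
      Tendsto (iteratedDerivWithin j (fun t : ℝ => g t * t ^ (-α)) (Set.Ioi (0 : ℝ)))
        (𝓝[>] (0 : ℝ)) (nhds L))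
    (G : ℝ → ℝ)
    (hG : ∀ t : ℝ, G t = if 0 < t then iteratedDerivWithin (k - 1) g (Set.Ioi (0 : ℝ)) t
      else 0) :
    Integrable (fun s : ℝ => |G (1 - s) - G (-s)| ^ β) ∧
    Tendsto (fun n : ℕ =>
        ∫ s : ℝ, |(n : ℝ) ^ (k - 1) *
          (ginKernel g (k - 1) n n s - ginKernel g (k - 1) n (k - 1) s)| ^ β)
      atTop (nhds (∫ s : ℝ, |G (1 - s) - G (-s)| ^ β)) := by
  obtain ⟨m, rfl⟩ : ∃ m, k = m + 1 := ⟨k - 1, by omega⟩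
  push_cast at hα1 hα2 hgkb
  rw [Nat.add_sub_cancel] at hG ⊢
  have hGm : G = zeroExtIteratedDeriv g m := funext fun t => by
    simp only [hG, zeroExtIteratedDeriv, indicator_apply, mem_Ioi]
  have hαβ : (α - (m + 1)) * β < -1 := by
    have h := mul_lt_mul_of_pos_right (by linarith : α - (m + 1) < -(1 / β)) (by linarith : 0 < β)
    rwa [neg_mul, one_div_mul_cancel (by linarith)] at h
  obtain ⟨hint, hlim⟩ := integrable_and_tendsto_integral_zeroExtIteratedDeriv (by linarith)
    (by linarith) hαβ hgk hgkb fun i hi => hζ i (by omega)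
  rw [hGm]
  refine ⟨hint, hlim.congr fun n => integral_congr_ae ?_⟩
  have hg := ae_eq_zeroExtIteratedDeriv_zero hg0
  filter_upwards [ginKernel_ae_eq hg m n n, ginKernel_ae_eq hg m n m] with s h₁ h₂
  rw [h₁, h₂]

/-- the `L^β`-convergence (5.32) of the paper: under Assumption (A2)
with `β ∈ (1,2)` and `α ∈ (k−1, k−1/β)`, interpreting `g^{(k−1)}` as `0` on `(−∞,0]`,
one has `∫ |n^{k−1}(g_{n,n,k−1}(s) − g_{k−1,n,k−1}(s))|^β ds →
∫ |g^{(k−1)}(1−s) − g^{(k−1)}(−s)|^β ds =: c₀ < ∞` as `n → ∞`. -/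
theorem statement18
    {k : ℕ} (hk : 1 ≤ k) {β α : ℝ} (hβ1 : 1 < β) (hβ2 : β < 2)
    (hα1 : (k : ℝ) - 1 < α) (hα2 : α < (k : ℝ) - 1 / β)
    (g : ℝ → ℝ)
    (hg0 : ∀ t < (0 : ℝ), g t = 0)
    (hgk : ContDiffOn ℝ (k : ℕ∞) g (Set.Ioi (0 : ℝ)))
    {C : ℝ} (hC : 0 < C)
    (hgkb : ∀ t > (0 : ℝ),
      |iteratedDerivWithin k g (Set.Ioi (0 : ℝ)) t| ≤ C * t ^ (α - (k : ℝ)))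
    (hζ : ∀ j : ℕ, j ≤ k → ∃ L : ℝ,
      Tendsto (iteratedDerivWithin j (fun t : ℝ => g t * t ^ (-α)) (Set.Ioi (0 : ℝ)))
        (𝓝[>] (0 : ℝ)) (nhds L))
    (G : ℝ → ℝ)
    (hG : ∀ t : ℝ, G t = if 0 < t then iteratedDerivWithin (k - 1) g (Set.Ioi (0 : ℝ)) t
      else 0) :
    Integrable (fun s : ℝ => |G (1 - s) - G (-s)| ^ β) ∧
    Tendsto (fun n : ℕ =>
        ∫ s : ℝ, |(n : ℝ) ^ (k - 1) *
          (ginKernel g (k - 1) n n s - ginKernel g (k - 1) n (k - 1) s)| ^ β)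
      atTop (nhds (∫ s : ℝ, |G (1 - s) - G (-s)| ^ β)) :=
  statement18_general hk hβ1 hα1 hα2 g hg0 hgk hgkb hζ G hG
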